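/- Let 1 < α* < 2 and L > 0. If z : [0, L) → ℝ is locally absolutely continuous on (0, L), satisfies z(x) → 0 as x → L⁻, and ∫₀^L x^{α*} z'(x)² dx < ∞, then ∫₀^L x^{α*-2} z(x)² dx ≤ (4/(α*-1)²) ∫₀^L x^{α*} z'(x)² dx. -/

import Mathlib

/-!
Write `z x = -∫_x^L z'`. Cauchy–Schwarz against the weight `t ^ γ`, `1 < γ < α*`, gives
`z x ^ 2 ≤ x ^ (1 - γ) / (γ - 1) * ∫_x^L t ^ γ * z' t ^ 2`. Multiplying by `x ^ (α* - 2)`,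
integrating over `(0, L)` and exchanging the order of integration bounds the left-hand side by
`((γ - 1) * (α* - γ))⁻¹ * ∫_0^L t ^ α* * z' t ^ 2`; the choice `γ = (α* + 1) / 2` gives the
constant `4 / (α* - 1) ^ 2`. Working with `ℝ≥0∞`-valued integrals, the computation needs no
integrability of the left-hand side.
-/

open MeasureTheory Set Filter Topology
open scoped ENNReal

theorem ENNReal.sq_lintegral_mul_le {α : Type*} [MeasurableSpace α] {μ : Measure α}
    {f g : α → ℝ≥0∞} (hf : AEMeasurable f μ) (hg : AEMeasurable g μ) :
    (∫⁻ a, f a * g a ∂μ) ^ 2 ≤ (∫⁻ a, f a ^ 2 ∂μ) * ∫⁻ a, g a ^ 2 ∂μ := by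
  have h := ENNReal.lintegral_mul_le_Lp_mul_Lq μ Real.HolderConjugate.two_two hf hg
  simp only [Pi.mul_apply, ENNReal.rpow_two] at h
  calc (∫⁻ a, f a * g a ∂μ) ^ 2
      ≤ ((∫⁻ a, f a ^ 2 ∂μ) ^ (1 / 2 : ℝ) * (∫⁻ a, g a ^ 2 ∂μ) ^ (1 / 2 : ℝ)) ^ 2 := by
        gcongr
    _ = (∫⁻ a, f a ^ 2 ∂μ) * ∫⁻ a, g a ^ 2 ∂μ := by
        rw [mul_pow, ← ENNReal.rpow_natCast, ← ENNReal.rpow_natCast, ← ENNReal.rpow_mul,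
          ← ENNReal.rpow_mul]
        norm_num

theorem sq_lintegral_enorm_le_of_weight {α : Type*} [MeasurableSpace α] {μ : Measure α}
    {f w : α → ℝ} (hf : AEMeasurable f μ) (hw : AEMeasurable w μ) (hw0 : ∀ᵐ a ∂μ, 0 < w a) :
    (∫⁻ a, ‖f a‖ₑ ∂μ) ^ 2 ≤
      (∫⁻ a, ENNReal.ofReal (w a)⁻¹ ∂μ) * ∫⁻ a, ENNReal.ofReal (w a * f a ^ 2) ∂μ := by
  have hsplit : ∀ᵐ a ∂μ, ‖f a‖ₑ =
      ENNReal.ofReal (√(w a)⁻¹) * ENNReal.ofReal (√(w a) * |f a|) := by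
    filter_upwards [hw0] with a ha
    rw [← ENNReal.ofReal_mul (by positivity), ← mul_assoc, Real.sqrt_inv,
      inv_mul_cancel₀ (by positivity), one_mul, Real.enorm_eq_ofReal_abs]
  calc (∫⁻ a, ‖f a‖ₑ ∂μ) ^ 2
      = (∫⁻ a, ENNReal.ofReal (√(w a)⁻¹) * ENNReal.ofReal (√(w a) * |f a|) ∂μ) ^ 2 := by
        rw [lintegral_congr_ae hsplit]
    _ ≤ (∫⁻ a, ENNReal.ofReal (√(w a)⁻¹) ^ 2 ∂μ) *
          ∫⁻ a, ENNReal.ofReal (√(w a) * |f a|) ^ 2 ∂μ :=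
        ENNReal.sq_lintegral_mul_le (by fun_prop) (by fun_prop)
    _ = _ := by
        congr 1 <;> refine lintegral_congr_ae (hw0.mono fun a ha => ?_) <;> dsimp only
        · rw [← ENNReal.ofReal_pow (by positivity), Real.sq_sqrt (by positivity)]
        · rw [← ENNReal.ofReal_pow (by positivity), mul_pow, Real.sq_sqrt ha.le, sq_abs]

theorem lintegral_Ioi_rpow_inv {p x : ℝ} (hp : 1 < p) (hx : 0 < x) :
    ∫⁻ t in Ioi x, ENNReal.ofReal (t ^ p)⁻¹ = ENNReal.ofReal (x ^ (1 - p) / (p - 1)) := by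
  have hp' : -p < -1 := by linarith
  rw [setLIntegral_congr_fun measurableSet_Ioi fun t (ht : x < t) =>
      congrArg ENNReal.ofReal (Real.rpow_neg (hx.trans ht).le p).symm,
    ← ofReal_integral_eq_lintegral_ofReal (integrableOn_Ioi_rpow_of_lt hp' hx)
      ((ae_restrict_iff' measurableSet_Ioi).2 (.of_forall fun t (ht : x < t) =>
        Real.rpow_nonneg (hx.trans ht).le _)),
    integral_Ioi_rpow_of_lt hp' hx, neg_div, ← div_neg]
  ring_nf

theorem lintegral_Ioo_zero_rpow {s t : ℝ} (hs : -1 < s) (ht : 0 ≤ t) :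
    ∫⁻ x in Ioo 0 t, ENNReal.ofReal (x ^ s) = ENNReal.ofReal (t ^ (s + 1) / (s + 1)) := by
  have hint : IntegrableOn (fun x : ℝ => x ^ s) (Ioc 0 t) :=
    (intervalIntegrable_iff_integrableOn_Ioc_of_le ht).1
      (intervalIntegral.intervalIntegrable_rpow' hs)
  rw [← ofReal_integral_eq_lintegral_ofReal (hint.mono_set Ioo_subset_Ioc_self)
      ((ae_restrict_iff' measurableSet_Ioo).2 (.of_forall fun x hx => Real.rpow_nonneg hx.1.le _)),
    ← integral_Ioc_eq_integral_Ioo, ← intervalIntegral.integral_of_le ht,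
    integral_rpow (.inl hs), Real.zero_rpow (by linarith), sub_zero]

theorem lintegral_Ioo_mul_lintegral_Ioo_comm {μ : Measure ℝ} [SFinite μ] {a b : ℝ}
    {c ψ : ℝ → ℝ≥0∞} (hc : AEMeasurable c (μ.restrict (Ioo a b)))
    (hψ : AEMeasurable ψ (μ.restrict (Ioo a b))) :
    ∫⁻ x in Ioo a b, c x * ∫⁻ t in Ioo x b, ψ t ∂μ ∂μ =
      ∫⁻ t in Ioo a b, ψ t * ∫⁻ x in Ioo a t, c x ∂μ ∂μ := by
  set F : ℝ × ℝ → ℝ≥0∞ := {p | p.1 < p.2}.indicator fun p => c p.1 * ψ p.2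
  have hF : AEMeasurable F ((μ.restrict (Ioo a b)).prod (μ.restrict (Ioo a b))) :=
    (hc.comp_fst.mul hψ.comp_snd).indicator (measurableSet_lt measurable_fst measurable_snd)
  calc ∫⁻ x in Ioo a b, c x * ∫⁻ t in Ioo x b, ψ t ∂μ ∂μ
      = ∫⁻ x in Ioo a b, ∫⁻ t in Ioo a b, F (x, t) ∂μ ∂μ := by
        refine setLIntegral_congr_fun measurableSet_Ioo fun x hx => ?_
        have hFx : (fun t => F (x, t)) = (Ioi x).indicator fun t => c x * ψ t := by
          ext t; simp [F, indicator]
        rw [hFx, lintegral_indicator measurableSet_Ioi,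
          Measure.restrict_restrict measurableSet_Ioi, Ioi_inter_Ioo, max_eq_left hx.1.le,
          lintegral_const_mul'' _ (hψ.mono_set (Ioo_subset_Ioo_left hx.1.le))]
    _ = ∫⁻ t in Ioo a b, ∫⁻ x in Ioo a b, F (x, t) ∂μ ∂μ := lintegral_lintegral_swap hF
    _ = _ := by
        refine setLIntegral_congr_fun measurableSet_Ioo fun t ht => ?_
        have hFt : (fun x => F (x, t)) = (Iio t).indicator fun x => ψ t * c x := by
          ext x; simp [F, indicator, mul_comm]
        rw [hFt, lintegral_indicator measurableSet_Iio,
          Measure.restrict_restrict measurableSet_Iio, Iio_inter_Ioo, min_eq_left ht.2.le,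
          lintegral_const_mul'' _ (hc.mono_set (Ioo_subset_Ioo_right ht.2.le))]

theorem sub_eq_setIntegral_Ioo_of_tendsto {f g : ℝ → ℝ} {a b l : ℝ} (hab : a < b)
    (hf : IntegrableOn f (Ioo a b)) (hg : ∀ y ∈ Ioo a b, g y - g a = ∫ t in a..y, f t)
    (hl : Tendsto g (𝓝[<] b) (𝓝 l)) :
    l - g a = ∫ t in Ioo a b, f t := by
  have hF : ContinuousOn (fun y => ∫ t in a..y, f t) (Icc a b) := by
    have hf' : IntegrableOn f (uIcc a b) := by
      rwa [uIcc_of_le hab.le, integrableOn_Icc_iff_integrableOn_Ioo]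
    simpa [uIcc_of_le hab.le] using intervalIntegral.continuousOn_primitive_interval hf'
  have hFb : Tendsto (fun y => g a + ∫ t in a..y, f t) (𝓝[<] b)
      (𝓝 (g a + ∫ t in a..b, f t)) :=
    tendsto_const_nhds.add <| ((hF b (right_mem_Icc.2 hab.le)).mono
      Ioo_subset_Icc_self).tendsto.mono_left (nhdsWithin_le_of_mem (Ioo_mem_nhdsLT hab))
  have hgF : (fun y => g a + ∫ t in a..y, f t) =ᶠ[𝓝[<] b] g :=
    eventually_of_mem (Ioo_mem_nhdsLT hab) fun y hy => by linarith [hg y hy]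
  rw [← tendsto_nhds_unique (hFb.congr' hgF) hl, intervalIntegral.integral_of_le hab.le,
    integral_Ioc_eq_integral_Ioo]
  ring

theorem locallyIntegrableOn_Ioo_of_intervalIntegrable {f : ℝ → ℝ} {a b : ℝ}
    (hf : ∀ c d, a < c → c ≤ d → d < b → IntervalIntegrable f volume c d) :
    LocallyIntegrableOn f (Ioo a b) := by
  rintro x ⟨hax, hxb⟩
  have hc : a < (a + x) / 2 := by linarith
  have hd : (x + b) / 2 < b := by linarith
  refine ⟨Icc ((a + x) / 2) ((x + b) / 2), mem_nhdsWithin_of_mem_nhds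
    (Icc_mem_nhds (by linarith) (by linarith)), ?_⟩
  rw [integrableOn_Icc_iff_integrableOn_Ioc]
  exact (intervalIntegrable_iff_integrableOn_Ioc_of_le (by linarith)).1
    (hf _ _ hc (by linarith) hd)

section HardyRightEndpoint

variable {α L : ℝ} {z z' : ℝ → ℝ}

theorem ofReal_sq_le_rpow_mul_lintegral {γ x : ℝ} (hα : 1 < α) (hγ : 1 < γ)
    (hAC : ∀ a b : ℝ, 0 < a → a ≤ b → b < L →
      IntervalIntegrable z' volume a b ∧ z b - z a = ∫ μ in a..b, z' μ)
    (hLlim : Tendsto z (𝓝[<] L) (𝓝 0))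
    (hint : IntegrableOn (fun t => t ^ α * z' t ^ 2) (Ioo 0 L)) (hx : x ∈ Ioo 0 L) :
    ENNReal.ofReal (z x ^ 2) ≤ ENNReal.ofReal (x ^ (1 - γ) / (γ - 1)) *
      ∫⁻ t in Ioo x L, ENNReal.ofReal (t ^ γ * z' t ^ 2) := by
  have hmeas : AEStronglyMeasurable z' (volume.restrict (Ioo x L)) :=
    ((locallyIntegrableOn_Ioo_of_intervalIntegrable fun c d hc hcd hd =>
      (hAC c d hc hcd hd).1).aestronglyMeasurable).mono_set (Ioo_subset_Ioo_left hx.1.le)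
  have hCS : ∀ p, 1 < p → (∫⁻ t in Ioo x L, ‖z' t‖ₑ) ^ 2 ≤
      ENNReal.ofReal (x ^ (1 - p) / (p - 1)) *
        ∫⁻ t in Ioo x L, ENNReal.ofReal (t ^ p * z' t ^ 2) := by
    intro p hp
    calc (∫⁻ t in Ioo x L, ‖z' t‖ₑ) ^ 2
        ≤ (∫⁻ t in Ioo x L, ENNReal.ofReal (t ^ p)⁻¹) *
            ∫⁻ t in Ioo x L, ENNReal.ofReal (t ^ p * z' t ^ 2) :=
          sq_lintegral_enorm_le_of_weight hmeas.aemeasurable (by fun_prop)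
            ((ae_restrict_iff' measurableSet_Ioo).2 (.of_forall fun t ht =>
              Real.rpow_pos_of_pos (hx.1.trans ht.1) p))
      _ ≤ _ := by
          gcongr
          exact (lintegral_mono_set Ioo_subset_Ioi_self).trans
            (lintegral_Ioi_rpow_inv hp hx.1).le
  -- Cauchy–Schwarz with the weight `t ^ α` shows that `z'` is integrable on `(x, L)`.
  have hz'int : IntegrableOn z' (Ioo x L) := by
    have hfin : ∫⁻ t in Ioo x L, ENNReal.ofReal (t ^ α * z' t ^ 2) < ∞ :=
      (lintegral_mono_set (Ioo_subset_Ioo_left hx.1.le)).trans_lt hint.lintegral_lt_top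
    have hsq := (hCS α hα).trans_lt (ENNReal.mul_lt_top ENNReal.ofReal_lt_top hfin)
    exact ⟨hmeas, (hasFiniteIntegral_def _ _).2
      ((ENNReal.pow_lt_top_iff.1 hsq).resolve_right two_ne_zero)⟩
  have hz : z x = -∫ t in Ioo x L, z' t := by
    linarith [sub_eq_setIntegral_Ioo_of_tendsto hx.2 hz'int
      (fun y hy => (hAC x y hx.1 hy.1.le hy.2).2) hLlim]
  calc ENNReal.ofReal (z x ^ 2) = ‖z x‖ₑ ^ 2 := by
        rw [Real.enorm_eq_ofReal_abs, ← ENNReal.ofReal_pow (abs_nonneg _), sq_abs]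
    _ ≤ (∫⁻ t in Ioo x L, ‖z' t‖ₑ) ^ 2 := by
        gcongr
        rw [hz, enorm_neg]
        exact enorm_integral_le_lintegral_enorm _
    _ ≤ _ := hCS γ hγ

theorem lintegral_rpow_mul_sq_le {γ : ℝ} (hγ : 1 < γ) (hγα : γ < α)
    (hAC : ∀ a b : ℝ, 0 < a → a ≤ b → b < L →
      IntervalIntegrable z' volume a b ∧ z b - z a = ∫ μ in a..b, z' μ)
    (hLlim : Tendsto z (𝓝[<] L) (𝓝 0))
    (hint : IntegrableOn (fun t => t ^ α * z' t ^ 2) (Ioo 0 L)) :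
    ∫⁻ x in Ioo 0 L, ENNReal.ofReal (x ^ (α - 2) * z x ^ 2) ≤
      ENNReal.ofReal ((γ - 1) * (α - γ))⁻¹ *
        ∫⁻ t in Ioo 0 L, ENNReal.ofReal (t ^ α * z' t ^ 2) := by
  have hz' : AEMeasurable z' (volume.restrict (Ioo 0 L)) :=
    (locallyIntegrableOn_Ioo_of_intervalIntegrable fun c d hc hcd hd =>
      (hAC c d hc hcd hd).1).aestronglyMeasurable.aemeasurable
  calc ∫⁻ x in Ioo 0 L, ENNReal.ofReal (x ^ (α - 2) * z x ^ 2)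
      ≤ ∫⁻ x in Ioo 0 L, ENNReal.ofReal ((γ - 1)⁻¹ * x ^ (α - 1 - γ)) *
          ∫⁻ t in Ioo x L, ENNReal.ofReal (t ^ γ * z' t ^ 2) := by
        refine setLIntegral_mono' measurableSet_Ioo fun x hx => ?_
        have hx0 : 0 ≤ x ^ (α - 2) := Real.rpow_nonneg hx.1.le _
        have hpow : x ^ (α - 2) * (x ^ (1 - γ) / (γ - 1)) = (γ - 1)⁻¹ * x ^ (α - 1 - γ) := by
          rw [mul_div_assoc', ← Real.rpow_add hx.1]
          ring_nf
        calc ENNReal.ofReal (x ^ (α - 2) * z x ^ 2)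
            = ENNReal.ofReal (x ^ (α - 2)) * ENNReal.ofReal (z x ^ 2) := ENNReal.ofReal_mul hx0
          _ ≤ ENNReal.ofReal (x ^ (α - 2)) * (ENNReal.ofReal (x ^ (1 - γ) / (γ - 1)) *
                ∫⁻ t in Ioo x L, ENNReal.ofReal (t ^ γ * z' t ^ 2)) := by
              gcongr
              exact ofReal_sq_le_rpow_mul_lintegral (hγ.trans hγα) hγ hAC hLlim hint hx
          _ = _ := by rw [← mul_assoc, ← ENNReal.ofReal_mul hx0, hpow]
    _ = ∫⁻ t in Ioo 0 L, ENNReal.ofReal (t ^ γ * z' t ^ 2) *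
          ∫⁻ x in Ioo 0 t, ENNReal.ofReal ((γ - 1)⁻¹ * x ^ (α - 1 - γ)) :=
        lintegral_Ioo_mul_lintegral_Ioo_comm (by fun_prop) (by fun_prop)
    _ = ∫⁻ t in Ioo 0 L, ENNReal.ofReal ((γ - 1) * (α - γ))⁻¹ *
          ENNReal.ofReal (t ^ α * z' t ^ 2) := by
        refine setLIntegral_congr_fun measurableSet_Ioo fun t ht => ?_
        have hγ0 : 0 ≤ (γ - 1)⁻¹ := inv_nonneg.2 (by linarith)
        have hpow : t ^ γ * ((γ - 1)⁻¹ * (t ^ (α - γ) / (α - γ))) =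
            ((γ - 1) * (α - γ))⁻¹ * t ^ α := by
          rw [mul_comm, mul_assoc, div_mul_eq_mul_div, ← Real.rpow_add ht.1]
          field_simp
          ring_nf
        rw [setLIntegral_congr_fun measurableSet_Ioo fun x _ => ENNReal.ofReal_mul hγ0,
          lintegral_const_mul' _ _ ENNReal.ofReal_ne_top,
          lintegral_Ioo_zero_rpow (by linarith) ht.1.le, show α - 1 - γ + 1 = α - γ by ring,
          ← ENNReal.ofReal_mul hγ0,
          ← ENNReal.ofReal_mul (mul_nonneg (Real.rpow_nonneg ht.1.le _) (sq_nonneg _)),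
          ← ENNReal.ofReal_mul (inv_nonneg.2 (mul_nonneg (by linarith) (by linarith)))]
        congr 1
        linear_combination z' t ^ 2 * hpow
    _ = _ := lintegral_const_mul' _ _ ENNReal.ofReal_ne_top

end HardyRightEndpoint

theorem stmt1_general (αs L : ℝ) (hα1 : 1 < αs)
    (z z' : ℝ → ℝ)
    (hAC : ∀ a b : ℝ, 0 < a → a ≤ b → b < L →
      IntervalIntegrable z' volume a b ∧ z b - z a = ∫ μ in a..b, z' μ)
    (hLlim : Tendsto z (nhdsWithin L (Iio L)) (nhds 0))
    (hint : IntegrableOn (fun x => x ^ αs * (z' x) ^ 2) (Ioo 0 L)) :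
    ∫ x in Ioo 0 L, x ^ (αs - 2) * (z x) ^ 2
      ≤ (4 / (αs - 1) ^ 2) * ∫ x in Ioo 0 L, x ^ αs * (z' x) ^ 2 := by
  have hconst : (((αs + 1) / 2 - 1) * (αs - (αs + 1) / 2))⁻¹ = 4 / (αs - 1) ^ 2 := by
    field_simp
    ring
  have hC : 0 ≤ 4 / (αs - 1) ^ 2 := by positivity
  have hnonneg : ∀ (β : ℝ) (f : ℝ → ℝ), 0 ≤ᵐ[volume.restrict (Ioo 0 L)] fun x => x ^ β * f x ^ 2 :=
    fun β f => (ae_restrict_iff' measurableSet_Ioo).2 (.of_forall fun x hx =>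
      mul_nonneg (Real.rpow_nonneg hx.1.le _) (sq_nonneg _))
  have hRHS : 0 ≤ 4 / (αs - 1) ^ 2 * ∫ x in Ioo 0 L, x ^ αs * z' x ^ 2 :=
    mul_nonneg hC (integral_nonneg_of_ae (hnonneg αs z'))
  have hlin := lintegral_rpow_mul_sq_le (γ := (αs + 1) / 2) (by linarith) (by linarith)
    hAC hLlim hint
  rw [hconst, ← ofReal_integral_eq_lintegral_ofReal hint (hnonneg αs z'),
    ← ENNReal.ofReal_mul hC] at hlin
  -- If the left-hand side is not integrable, its Bochner integral is `0`.
  by_cases hLHS : IntegrableOn (fun x => x ^ (αs - 2) * z x ^ 2) (Ioo 0 L)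
  · rwa [← ENNReal.ofReal_le_ofReal_iff hRHS,
      ofReal_integral_eq_lintegral_ofReal hLHS (hnonneg _ z)]
  · rwa [integral_undef hLHS]

/-- Hardy-type inequality for `1 < α* < 2` with vanishing at the right endpoint. -/
theorem stmt1 (αs L : ℝ) (hα1 : 1 < αs) (hα2 : αs < 2) (hL : 0 < L)
    (z z' : ℝ → ℝ)
    (hAC : ∀ a b : ℝ, 0 < a → a ≤ b → b < L →
      IntervalIntegrable z' volume a b ∧ z b - z a = ∫ μ in a..b, z' μ)
    (hLlim : Tendsto z (nhdsWithin L (Iio L)) (nhds 0))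
    (hint : IntegrableOn (fun x => x ^ αs * (z' x) ^ 2) (Ioo 0 L)) :
    ∫ x in Ioo 0 L, x ^ (αs - 2) * (z x) ^ 2
      ≤ (4 / (αs - 1) ^ 2) * ∫ x in Ioo 0 L, x ^ αs * (z' x) ^ 2 :=
  stmt1_general αs L hα1 z z' hAC hLlim hint
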